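/- arXiv:1908.11763 — 6 statements merged into one kernel-verified Lean document; each statement's English description precedes it below -/
import Mathlib

section
/- Let Δ be an (M,N)-invariant subset of ℤ≥0 and let u ∈ {0,1}^{M+N} be its characteristic sequence on [0, M+N−1]. Then λ(u) also equals the number of M-generators of Δ in the interval [M, N+M−1]. -/
open scoped Classical

/-- `Δ ⊆ ℕ` is `(M,N)`-invariant: `Δ + M ⊆ Δ`, `Δ + N ⊆ Δ`, and cofinite. -/
def MNInvariant (M N : ℕ) (Δ : Set ℕ) : Prop :=
  (∀ k ∈ Δ, k + M ∈ Δ) ∧ (∀ k ∈ Δ, k + N ∈ Δ) ∧ (Δᶜ).Finite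

/-- The `M`-generators of `Δ`: elements `a ∈ Δ` with `a - M ∉ Δ`. -/
def Mgen (M : ℕ) (Δ : Set ℕ) : Set ℕ := {a ∈ Δ | ∀ b ∈ Δ, b + M ≠ a}

/-!
Both `∑_{i<M} (u_{i+N} - u_i)` and `∑_{i<N} (u_{i+M} - u_i)` equal
`∑_{i<M+N} u_i - ∑_{i<M} u_i - ∑_{i<N} u_i`, so `λ(u)` may be computed with the roles of `M` and
`N` exchanged. Since `Δ + M ⊆ Δ`, the term `u_{i+M} - u_i` is `0` or `1`, and it is `1` exactly
when `i + M` is an `M`-generator.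
-/

open Finset

theorem Finset.sum_range_shift_sub_comm {G : Type*} [AddCommGroup G] (f : ℕ → G) (M N : ℕ) :
    ∑ i ∈ range M, (f (i + N) - f i) = ∑ i ∈ range N, (f (i + M) - f i) := by
  have hNM := sum_range_add f N M
  have hMN := sum_range_add f M N
  rw [add_comm N M] at hNM
  simp only [sum_sub_distrib, add_comm _ N, add_comm _ M]
  rw [eq_sub_of_add_eq' hNM.symm, eq_sub_of_add_eq' hMN.symm]
  abel

theorem add_mem_Mgen_iff {M : ℕ} {Δ : Set ℕ} (i : ℕ) : i + M ∈ Mgen M Δ ↔ i + M ∈ Δ ∧ i ∉ Δ := by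
  simp only [Mgen, Set.mem_ofPred_eq, Nat.add_right_cancel_iff, ne_eq]
  exact and_congr_right fun _ ↦ ⟨fun h hi ↦ h i hi rfl, fun h b hb hbi ↦ h (hbi ▸ hb)⟩

theorem indicator_add_sub_indicator_of_add_mem {M : ℕ} {Δ : Set ℕ} (hΔ : ∀ k ∈ Δ, k + M ∈ Δ)
    (i : ℕ) :
    ((if i + M ∈ Δ then 1 else 0) - if i ∈ Δ then 1 else 0 : ℤ)
      = if i + M ∈ Mgen M Δ then 1 else 0 := by
  rw [add_mem_Mgen_iff]
  by_cases hi : i ∈ Δ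
  · simp [hi, hΔ i hi]
  · by_cases hiM : i + M ∈ Δ <;> simp [hi, hiM]

theorem sum_range_indicator_add_eq_ncard (S : Set ℕ) (M N : ℕ) :
    ∑ i ∈ range N, (if i + M ∈ S then 1 else 0 : ℤ) = (S ∩ Set.Ico M (M + N)).ncard := by
  have hS : S ∩ Set.Ico M (M + N) = ↑{i ∈ Ico M (M + N) | i ∈ S} := by
    ext; simp [and_comm]
  rw [hS, Set.ncard_coe_finset, ← sum_boole, sum_Ico_eq_sum_range, Nat.add_sub_cancel_left]
  simp only [add_comm M]

theorem stmt3_general (M N : ℕ) (Δ : Set ℕ)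
    (h : MNInvariant M N Δ) (u : ℕ → ℤ)
    (hu : ∀ i < M + N, u i = if i ∈ Δ then 1 else 0) :
    ∑ i ∈ Finset.range M, (u (i + N) - u i)
      = ((Mgen M Δ ∩ Set.Ico M (M + N)).ncard : ℤ) := by
  have hu' : ∑ i ∈ range M, (u (i + N) - u i)
      = ∑ i ∈ range M, ((if i + N ∈ Δ then 1 else 0) - if i ∈ Δ then 1 else 0 : ℤ) :=
    sum_congr rfl fun i hi ↦ by
      rw [mem_range] at hi
      rw [hu (i + N) (by omega), hu i (by omega)]
  rw [hu', sum_range_shift_sub_comm (fun i ↦ if i ∈ Δ then (1 : ℤ) else 0),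
    ← sum_range_indicator_add_eq_ncard]
  exact sum_congr rfl fun i _ ↦ indicator_add_sub_indicator_of_add_mem h.1 i

/-- If `u` is the indicator sequence of an `(M,N)`-invariant set `Δ` on `[0, M+N-1]`,
then `λ(u) = ∑_{i=0}^{M-1}(u_{i+N} - u_i)` equals the number of `M`-generators of `Δ`
in the interval `[M, N+M-1]`. -/
theorem stmt3 (M N : ℕ) (hM : 0 < M) (hN : 0 < N) (Δ : Set ℕ)
    (h : MNInvariant M N Δ) (u : ℕ → ℤ)
    (hu : ∀ i < M + N, u i = if i ∈ Δ then 1 else 0) :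
    ∑ i ∈ Finset.range M, (u (i + N) - u i)
      = ((Mgen M Δ ∩ Set.Ico M (M + N)).ncard : ℤ) :=
  stmt3_general M N Δ h u hu
end

section
/- Let Δ be an (M,N)-invariant subset with 0 ∉ Δ. Then codinv(ρ(Δ)) = codinv(Δ), where codinv(Δ) = ∑_{a ∈ Ngen(Δ)} #([a, a+M−1] ∩ complement(Δ)). -/
/-- The `N`-generators of `Δ`: elements `a ∈ Δ` with `a - N ∉ Δ`. -/
def Ngen (N : ℕ) (Δ : Set ℕ) : Set ℕ := {a ∈ Δ | ∀ b ∈ Δ, b + N ≠ a}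

/-- The shift map `ρ(Δ) = {k : k + 1 ∈ Δ}`. -/
def rho (Δ : Set ℕ) : Set ℕ := {k | k + 1 ∈ Δ}

/-- `codinv(Δ) = ∑_{a ∈ Ngen(Δ)} #([a, a+M-1] ∩ complement Δ)`. -/
noncomputable def codinv (M N : ℕ) (Δ : Set ℕ) : ℕ :=
  ∑ᶠ a ∈ Ngen N Δ, (Set.Ico a (a + M) ∩ Δᶜ).ncard

/- Shifting by one is a bijection `ρ(Δ) → Δ` as soon as `0 ∉ Δ`; it carries `N`-generators to
`N`-generators and the gaps `[a, a+M-1] ∖ ρ(Δ)` to the gaps `[a+1, a+M] ∖ Δ`, so the two sums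
defining `codinv` agree term by term. -/

open Set

lemma exists_eq_add_one_of_mem_of_zero_notMem {Δ : Set ℕ} (h0 : 0 ∉ Δ) {a : ℕ} (ha : a ∈ Δ) :
    ∃ b, a = b + 1 :=
  Nat.exists_eq_add_one_of_ne_zero (ne_of_mem_of_not_mem ha h0)

lemma Ngen_eq_image_add_one_Ngen_rho (N : ℕ) {Δ : Set ℕ} (h0 : 0 ∉ Δ) :
    Ngen N Δ = (· + 1) '' Ngen N (rho Δ) := by
  ext a
  simp only [mem_image, Ngen, rho, mem_ofPred_eq]
  constructor
  · rintro ⟨haΔ, hgen⟩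
    obtain ⟨b, rfl⟩ := exists_eq_add_one_of_mem_of_zero_notMem h0 haΔ
    exact ⟨b, ⟨haΔ, fun c hc hcb => hgen (c + 1) hc (by omega)⟩, rfl⟩
  · rintro ⟨b, ⟨hb, hgen⟩, rfl⟩
    refine ⟨hb, fun c hc hcb => ?_⟩
    obtain ⟨d, rfl⟩ := exists_eq_add_one_of_mem_of_zero_notMem h0 hc
    exact hgen d hc (by omega)

lemma image_add_one_Ico_inter_compl_rho (Δ : Set ℕ) (a M : ℕ) :
    (· + 1) '' (Ico a (a + M) ∩ (rho Δ)ᶜ) = Ico (a + 1) (a + 1 + M) ∩ Δᶜ := by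
  ext y
  simp only [mem_image, mem_inter_iff, mem_Ico, mem_compl_iff, rho, mem_ofPred_eq]
  constructor
  · rintro ⟨x, ⟨⟨hax, hxM⟩, hx⟩, rfl⟩
    exact ⟨⟨by omega, by omega⟩, hx⟩
  · rintro ⟨⟨hay, hyM⟩, hy⟩
    obtain ⟨x, rfl⟩ : ∃ x, y = x + 1 := ⟨y - 1, by omega⟩
    exact ⟨x, ⟨⟨by omega, by omega⟩, hy⟩, rfl⟩

lemma ncard_Ico_inter_compl_rho (Δ : Set ℕ) (a M : ℕ) :
    (Ico a (a + M) ∩ (rho Δ)ᶜ).ncard = (Ico (a + 1) (a + 1 + M) ∩ Δᶜ).ncard := by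
  rw [← image_add_one_Ico_inter_compl_rho, ncard_image_of_injective _ (add_left_injective 1)]

theorem stmt7_general (M N : ℕ) (Δ : Set ℕ)
    (h0 : 0 ∉ Δ) :
    codinv M N (rho Δ) = codinv M N Δ := by
  unfold codinv
  rw [Ngen_eq_image_add_one_Ngen_rho N h0,
    finsum_mem_image (add_left_injective 1).injOn]
  exact finsum_mem_congr rfl fun a _ => ncard_Ico_inter_compl_rho Δ a M

/-- If `0 ∉ Δ` then `codinv(ρ(Δ)) = codinv(Δ)`. -/
theorem stmt7 (M N : ℕ) (hM : 0 < M) (hN : 0 < N) (Δ : Set ℕ)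
    (h : MNInvariant M N Δ) (h0 : 0 ∉ Δ) :
    codinv M N (rho Δ) = codinv M N Δ :=
  stmt7_general M N Δ h0
end

section
/- Let Δ be an (M,N)-invariant subset with 0 ∈ Δ. Then codinv(ρ(Δ)) = codinv(Δ) − #([0,M−1] ∩ complement(Δ)) + #([N, N+M−1] ∩ complement(Δ)). -/
/-!
The shift `k ↦ k + 1` identifies `ρ(Δ)` with `Δ \ {0}`. It turns the term of `codinv(ρ(Δ))` at a
generator `a` into the term of `codinv(Δ)` at `a + 1`, and maps the `N`-generators of `ρ(Δ)` onto
those of `Δ`, except that `0` drops out and `N`, whose only witness `N - N = 0` has been removed,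
becomes a generator. So the two sums differ by exactly the `0`-term and the `N`-term.
-/

open Set

lemma finite_Ngen_of_finite_compl {N : ℕ} {Δ : Set ℕ} (hc : Δᶜ.Finite) : (Ngen N Δ).Finite := by
  refine ((finite_Iio N).union (hc.image (· + N))).subset fun a ha => ?_
  rcases lt_or_ge a N with hlt | hge
  · exact Or.inl hlt
  · exact Or.inr ⟨a - N, fun hmem => ha.2 (a - N) hmem (by omega), Nat.sub_add_cancel hge⟩

lemma image_succ_Ico_inter_compl_rho (M a : ℕ) (Δ : Set ℕ) :
    (· + 1) '' (Ico a (a + M) ∩ (rho Δ)ᶜ) = Ico (a + 1) (a + 1 + M) ∩ Δᶜ := by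
  ext c
  simp only [mem_image, mem_inter_iff, mem_Ico, mem_compl_iff, rho, mem_ofPred_eq]
  constructor
  · rintro ⟨k, ⟨⟨hak, hkM⟩, hk⟩, rfl⟩
    exact ⟨⟨by omega, by omega⟩, hk⟩
  · rintro ⟨⟨hac, hcM⟩, hc⟩
    exact ⟨c - 1, ⟨⟨by omega, by omega⟩, by rwa [Nat.sub_add_cancel (by omega)]⟩, by omega⟩

lemma codinv_rho (M N : ℕ) (Δ : Set ℕ) :
    codinv M N (rho Δ) = ∑ᶠ c ∈ (· + 1) '' Ngen N (rho Δ), (Ico c (c + M) ∩ Δᶜ).ncard := by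
  rw [finsum_mem_image fun x _ y _ hxy => Nat.succ_injective hxy, codinv]
  refine finsum_mem_congr rfl fun a _ => ?_
  rw [← image_succ_Ico_inter_compl_rho, ncard_image_of_injective _ Nat.succ_injective]

lemma image_succ_Ngen_rho {N : ℕ} {Δ : Set ℕ} (hN : 0 < N) (hNΔ : N ∈ Δ) :
    (· + 1) '' Ngen N (rho Δ) = (Ngen N Δ \ {0}) ∪ {N} := by
  ext c
  simp only [mem_image, mem_union, mem_sdiff, mem_singleton_iff, Ngen, rho, mem_ofPred_eq]
  constructor
  · rintro ⟨a, ⟨ha, hagen⟩, rfl⟩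
    by_cases haN : a + 1 = N
    · exact Or.inr haN
    · refine Or.inl ⟨⟨ha, fun b hb hba => ?_⟩, by omega⟩
      obtain _ | b := b
      · omega
      · exact hagen b hb (by omega)
  · rintro (⟨⟨hc, hcgen⟩, hc0⟩ | rfl)
    · refine ⟨c - 1, ⟨by rwa [Nat.sub_add_cancel (by omega)], fun b hb hbc => ?_⟩, by omega⟩
      exact hcgen (b + 1) hb (by omega)
    · exact ⟨c - 1, ⟨by rwa [Nat.sub_add_cancel hN], fun b _ _ => by omega⟩, by omega⟩

lemma codinv_eq_add_finsum_sdiff_singleton {M N a : ℕ} {Δ : Set ℕ} (hfin : (Ngen N Δ).Finite)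
    (ha : a ∈ Ngen N Δ) :
    codinv M N Δ = (Ico a (a + M) ∩ Δᶜ).ncard
      + ∑ᶠ c ∈ Ngen N Δ \ {a}, (Ico c (c + M) ∩ Δᶜ).ncard := by
  rw [codinv, ← finsum_mem_insert (fun c => (Ico c (c + M) ∩ Δᶜ).ncard) (by simp) hfin.sdiff,
    insert_sdiff_singleton, insert_eq_of_mem ha]

theorem stmt8_general (M N : ℕ) (hN : 0 < N) (Δ : Set ℕ)
    (h : MNInvariant M N Δ) (h0 : 0 ∈ Δ) :
    (codinv M N (rho Δ) : ℤ)
      = (codinv M N Δ : ℤ) - ((Set.Ico 0 M ∩ Δᶜ).ncard : ℤ)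
        + ((Set.Ico N (N + M) ∩ Δᶜ).ncard : ℤ) := by
  obtain ⟨-, hNinv, hc⟩ := h
  have hNΔ : N ∈ Δ := by simpa using hNinv 0 h0
  have hfin := finite_Ngen_of_finite_compl (N := N) hc
  have h0gen : 0 ∈ Ngen N Δ := ⟨h0, fun b _ => by omega⟩
  have hNgen : N ∉ Ngen N Δ := fun hg => hg.2 0 h0 (zero_add N)
  rw [codinv_rho, image_succ_Ngen_rho hN hNΔ,
    finsum_mem_union (disjoint_singleton_right.mpr fun hN' => hNgen hN'.1) hfin.sdiff
      (finite_singleton N), finsum_mem_singleton,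
    codinv_eq_add_finsum_sdiff_singleton hfin h0gen, zero_add]
  push_cast
  ring

/-- If `0 ∈ Δ` then
`codinv(ρ(Δ)) = codinv(Δ) - #([0,M-1] ∩ Δᶜ) + #([N,N+M-1] ∩ Δᶜ)`. -/
theorem stmt8 (M N : ℕ) (hM : 0 < M) (hN : 0 < N) (Δ : Set ℕ)
    (h : MNInvariant M N Δ) (h0 : 0 ∈ Δ) :
    (codinv M N (rho Δ) : ℤ)
      = (codinv M N Δ : ℤ) - ((Set.Ico 0 M ∩ Δᶜ).ncard : ℤ)
        + ((Set.Ico N (N + M) ∩ Δᶜ).ncard : ℤ) :=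
  stmt8_general M N hN Δ h h0
end

section
/- For any (M,N)-invariant subset Δ disjoint from [0, M+N−1], codinv(Δ) = codinv(Δ − (M+N)), i.e., codinv is invariant under shifting down by M+N. -/
/-
Translating a set by `s` translates its `N`-generators and each window `[a, a+M-1] ∩ (ℕ \ Δ)`
by `s`, so `codinv` is translation invariant. A set missing `[0, M+N-1]` is the translate by
`M+N` of `Δ - (M+N)`.
-/

open Set

section Translation

variable (s : ℕ)

theorem Ngen_image_add_const (N : ℕ) (Δ : Set ℕ) :
    Ngen N ((· + s) '' Δ) = (· + s) '' Ngen N Δ := by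
  ext a
  constructor
  · rintro ⟨⟨a', ha', rfl⟩, hgen⟩
    exact ⟨a', ⟨ha', fun b hb hba => hgen (b + s) ⟨b, hb, rfl⟩ (by beta_reduce; omega)⟩, rfl⟩
  · rintro ⟨a', ⟨ha', hgen⟩, rfl⟩
    refine ⟨⟨a', ha', rfl⟩, ?_⟩
    rintro _ ⟨b, hb, rfl⟩ hba
    exact hgen b hb (by beta_reduce at hba; omega)

theorem Ico_inter_compl_image_add_const (a M : ℕ) (Δ : Set ℕ) :
    Ico (a + s) (a + s + M) ∩ ((· + s) '' Δ)ᶜ = (· + s) '' (Ico a (a + M) ∩ Δᶜ) := by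
  ext x
  simp only [mem_inter_iff, mem_Ico, mem_compl_iff, mem_image]
  constructor
  · rintro ⟨⟨hlo, hhi⟩, hx⟩
    refine ⟨x - s, ⟨⟨by omega, by omega⟩, fun hΔ => hx ⟨x - s, hΔ, by omega⟩⟩, by omega⟩
  · rintro ⟨y, ⟨⟨hlo, hhi⟩, hy⟩, rfl⟩
    refine ⟨⟨by omega, by omega⟩, ?_⟩
    rintro ⟨z, hz, hzy⟩
    exact hy (by rwa [add_right_cancel hzy] at hz)

theorem codinv_image_add_const (M N : ℕ) (Δ : Set ℕ) :
    codinv M N ((· + s) '' Δ) = codinv M N Δ := by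
  unfold codinv
  rw [Ngen_image_add_const, finsum_mem_image (fun _ _ _ _ => add_right_cancel)]
  refine finsum_mem_congr rfl fun a _ => ?_
  rw [Ico_inter_compl_image_add_const,
    ncard_image_of_injective _ (add_left_injective s)]

theorem image_add_const_preimage_of_forall_lt_notMem {Δ : Set ℕ} (hΔ : ∀ i < s, i ∉ Δ) :
    (· + s) '' ((· + s) ⁻¹' Δ) = Δ := by
  refine image_preimage_eq_of_subset fun a ha => ⟨a - s, ?_⟩
  exact Nat.sub_add_cancel (not_lt.mp fun has => hΔ a has ha)

end Translation

theorem stmt13_general (M N : ℕ) (Δ : Set ℕ)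
    (hdisj : ∀ i < M + N, i ∉ Δ) :
    codinv M N Δ = codinv M N {k : ℕ | k + (M + N) ∈ Δ} := by
  conv_lhs => rw [← image_add_const_preimage_of_forall_lt_notMem (M + N) hdisj]
  exact codinv_image_add_const (M + N) M N _

/-- For an `(M,N)`-invariant subset `Δ` disjoint from `[0, M+N-1]`,
`codinv(Δ) = codinv(Δ - (M+N))`. -/
theorem stmt13 (M N : ℕ) (hM : 0 < M) (hN : 0 < N) (Δ : Set ℕ)
    (h : MNInvariant M N Δ) (hdisj : ∀ i < M + N, i ∉ Δ) :
    codinv M N Δ = codinv M N {k : ℕ | k + (M + N) ∈ Δ} :=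
  stmt13_general M N Δ hdisj
end

section
/- For (M,N) = (2,2): the generating function P_{0000}(q,t) = ∑ q^{area(Δ)} t^{codinv(Δ)} over all (2,2)-invariant subsets Δ ⊆ ℤ≥0 disjoint from {0,1,2,3} equals q^4/(1−q) + q^5 t/(1−q)^2 as an element of ℤ[t][[q]]. -/
/-- `Δ ⊆ ℕ` is `(2,2)`-invariant: `Δ + 2 ⊆ Δ` and cofinite. -/
def Inv22 (Δ : Set ℕ) : Prop := (∀ k ∈ Δ, k + 2 ∈ Δ) ∧ (Δᶜ).Finite

/-- `area(Δ)` is the number of gaps of `Δ`. -/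
noncomputable def area (Δ : Set ℕ) : ℕ := (Δᶜ).ncard

/-- The `2`-generators of `Δ`. -/
def Ngen2 (Δ : Set ℕ) : Set ℕ := {a ∈ Δ | ∀ b ∈ Δ, b + 2 ≠ a}

/-- `codinv(Δ) = ∑_{a ∈ Ngen(Δ)} #([a, a+1] ∩ complement Δ)` for `(M,N) = (2,2)`. -/
noncomputable def codinv22 (Δ : Set ℕ) : ℕ :=
  ∑ᶠ a ∈ Ngen2 Δ, (Set.Ico a (a + 2) ∩ Δᶜ).ncard

open PowerSeries in
/-- `P_{0000}(q,t) = ∑ q^{area Δ} t^{codinv Δ}` over `(2,2)`-invariant subsets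
disjoint from `{0,1,2,3}`, as an element of `ℤ[t][[q]]`. -/
noncomputable def P0000 : PowerSeries (Polynomial ℤ) :=
  PowerSeries.mk fun k =>
    ∑ᶠ Δ ∈ {Δ : Set ℕ | Inv22 Δ ∧ (∀ i < 4, i ∉ Δ) ∧ area Δ = k},
      (Polynomial.X : Polynomial ℤ) ^ codinv22 Δ

/-! A `(2,2)`-invariant set is determined by its least even element `2m` and its least
odd element `2n+1`; it has area `m + n`, generators `2m` and `2n+1`, and `codinv` equal to `0` when
`n ≤ m ≤ n + 1` and to `1` otherwise. So the coefficient of `q^k` in `P_{0000}` is a sum over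
`2 ≤ m ≤ k - 2` in which only the balanced `m = ⌈k/2⌉` contributes `1` and the other `k - 4`
values contribute `t`, i.e. `P_{0000} = q^4 ∑ₖ (1 + k t) q^k`, and `(1 - q)^2 ∑ₖ (1 + k t) q^k = 1 - q + q t`. -/

def span22 (m n : ℕ) : Set ℕ := {x | (x % 2 = 0 ∧ 2 * m ≤ x) ∨ (x % 2 = 1 ∧ 2 * n + 1 ≤ x)}

@[simp]
lemma mem_span22 {m n x : ℕ} :
    x ∈ span22 m n ↔ (x % 2 = 0 ∧ 2 * m ≤ x) ∨ (x % 2 = 1 ∧ 2 * n + 1 ≤ x) := Iff.rfl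

lemma span22_inj {m n m' n' : ℕ} : span22 m n = span22 m' n' ↔ m = m' ∧ n = n' := by
  refine ⟨fun h => ?_, fun ⟨rfl, rfl⟩ => rfl⟩
  have h₁ := Set.ext_iff.mp h (2 * m)
  have h₂ := Set.ext_iff.mp h (2 * m')
  have h₃ := Set.ext_iff.mp h (2 * n + 1)
  have h₄ := Set.ext_iff.mp h (2 * n' + 1)
  simp only [mem_span22] at h₁ h₂ h₃ h₄
  omega

lemma compl_span22 (m n : ℕ) :
    (span22 m n)ᶜ = ↑((Finset.range m).image (2 * ·) ∪ (Finset.range n).image (2 * · + 1)) := by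
  ext x
  simp only [Set.mem_compl_iff, mem_span22, Finset.coe_union, Finset.coe_image, Finset.coe_range,
    Set.mem_union, Set.mem_image, Set.mem_Iio]
  constructor
  · intro hx
    rcases Nat.mod_two_eq_zero_or_one x with h | h
    · exact Or.inl ⟨x / 2, by omega, by omega⟩
    · exact Or.inr ⟨x / 2, by omega, by omega⟩
  · rintro (⟨j, hj, rfl⟩ | ⟨j, hj, rfl⟩) <;> omega

lemma inv22_span22 (m n : ℕ) : Inv22 (span22 m n) :=
  ⟨fun k hk => by simp only [mem_span22] at hk ⊢; omega,
    compl_span22 m n ▸ Finset.finite_toSet _⟩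

lemma area_span22 (m n : ℕ) : area (span22 m n) = m + n := by
  rw [area, compl_span22, Set.ncard_coe_finset, Finset.card_union_of_disjoint,
    Finset.card_image_of_injective _ (fun a b h => by omega),
    Finset.card_image_of_injective _ (fun a b h => by omega), Finset.card_range, Finset.card_range]
  simp only [Finset.disjoint_left, Finset.mem_image, Finset.mem_range]
  omega

lemma Ngen2_span22 (m n : ℕ) : Ngen2 (span22 m n) = {2 * m, 2 * n + 1} := by
  ext a
  simp only [Ngen2, mem_span22, Set.mem_ofPred_eq, Set.mem_insert_iff, Set.mem_singleton_iff]
  constructor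
  · rintro ⟨ha, hmin⟩
    by_contra hne
    exact hmin (a - 2) (by omega) (by omega)
  · rintro (rfl | rfl) <;> refine ⟨by omega, fun b hb => by omega⟩

open Classical in
lemma ncard_Ico_add_two_inter_compl {Δ : Set ℕ} {a : ℕ} (ha : a ∈ Δ) :
    (Set.Ico a (a + 2) ∩ Δᶜ).ncard = if a + 1 ∈ Δ then 0 else 1 := by
  split_ifs with h
  · rw [Set.ncard_eq_zero]
    ext x
    simp only [Set.mem_inter_iff, Set.mem_Ico, Set.mem_compl_iff, Set.mem_empty_iff_false,
      iff_false, not_and, not_not]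
    intro hx
    obtain rfl | rfl : x = a ∨ x = a + 1 := by omega
    exacts [ha, h]
  · rw [Set.ncard_eq_one]
    refine ⟨a + 1, Set.ext fun x => ?_⟩
    simp only [Set.mem_inter_iff, Set.mem_Ico, Set.mem_compl_iff, Set.mem_singleton_iff]
    constructor
    · rintro ⟨⟨h₁, h₂⟩, hx⟩
      obtain rfl | rfl : x = a ∨ x = a + 1 := by omega
      exacts [absurd ha hx, rfl]
    · rintro rfl
      exact ⟨⟨by omega, by omega⟩, h⟩

lemma codinv22_span22 (m n : ℕ) :
    codinv22 (span22 m n) = if n ≤ m ∧ m ≤ n + 1 then 0 else 1 := by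
  classical
  have hm : 2 * m ∈ span22 m n := by simp only [mem_span22]; omega
  have hn : 2 * n + 1 ∈ span22 m n := by simp only [mem_span22]; omega
  rw [codinv22, Ngen2_span22, finsum_mem_pair (by omega), ncard_Ico_add_two_inter_compl hm,
    ncard_Ico_add_two_inter_compl hn]
  simp only [mem_span22]
  split_ifs <;> omega

lemma add_two_mul_mem {Δ : Set ℕ} (hΔ : ∀ k ∈ Δ, k + 2 ∈ Δ) {x : ℕ} (hx : x ∈ Δ) (d : ℕ) :
    x + 2 * d ∈ Δ := by
  induction d with
  | zero => exact hx
  | succ d ih => exact hΔ _ ih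

lemma Inv22.exists_eq_span22 {Δ : Set ℕ} (hΔ : Inv22 Δ) : ∃ m n, Δ = span22 m n := by
  classical
  obtain ⟨N, hN⟩ := hΔ.2.bddAbove
  have hlarge : ∀ x, N < x → x ∈ Δ := fun x hx => by
    by_contra h
    exact absurd (hN h) (by omega)
  have he : ∃ j, 2 * j ∈ Δ := ⟨N + 1, hlarge _ (by omega)⟩
  have ho : ∃ j, 2 * j + 1 ∈ Δ := ⟨N + 1, hlarge _ (by omega)⟩
  refine ⟨Nat.find he, Nat.find ho, Set.ext fun x => ?_⟩
  rw [mem_span22]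
  constructor
  · intro hx
    rcases Nat.mod_two_eq_zero_or_one x with h | h
    · have hx' : 2 * (x / 2) ∈ Δ := by rwa [show 2 * (x / 2) = x by omega]
      have := Nat.find_min' he hx'
      omega
    · have hx' : 2 * (x / 2) + 1 ∈ Δ := by rwa [show 2 * (x / 2) + 1 = x by omega]
      have := Nat.find_min' ho hx'
      omega
  · rintro (⟨h, hx⟩ | ⟨h, hx⟩)
    · have := add_two_mul_mem hΔ.1 (Nat.find_spec he) (x / 2 - Nat.find he)
      rwa [show 2 * Nat.find he + 2 * (x / 2 - Nat.find he) = x by omega] at this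
    · have := add_two_mul_mem hΔ.1 (Nat.find_spec ho) (x / 2 - Nat.find ho)
      rwa [show 2 * Nat.find ho + 1 + 2 * (x / 2 - Nat.find ho) = x by omega] at this

lemma setOf_inv22_area_eq (k : ℕ) :
    {Δ : Set ℕ | Inv22 Δ ∧ (∀ i < 4, i ∉ Δ) ∧ area Δ = k}
      = (fun m => span22 m (k - m)) '' ↑(Finset.Icc 2 (k - 2)) := by
  ext Δ
  simp only [Set.mem_ofPred_eq, Set.mem_image, Finset.coe_Icc, Set.mem_Icc]
  constructor
  · rintro ⟨hΔ, hsmall, rfl⟩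
    obtain ⟨m, n, rfl⟩ := hΔ.exists_eq_span22
    have h₀ := hsmall (2 * m)
    have h₁ := hsmall (2 * n + 1)
    simp only [mem_span22] at h₀ h₁
    rw [area_span22]
    exact ⟨m, by omega, by rw [Nat.add_sub_cancel_left]⟩
  · rintro ⟨m, hm, rfl⟩
    refine ⟨inv22_span22 _ _, fun i hi => ?_, by rw [area_span22]; omega⟩
    simp only [mem_span22]
    omega

open PowerSeries

lemma coeff_P0000 (k : ℕ) :
    coeff k P0000 = if 4 ≤ k then 1 + ((k - 4 : ℕ) : Polynomial ℤ) * Polynomial.X else 0 := by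
  rw [P0000, coeff_mk, setOf_inv22_area_eq,
    finsum_mem_image fun m _ m' _ h => (span22_inj.mp h).1, finsum_mem_coe_finset]
  simp only [codinv22_span22]
  split_ifs with hk
  · have hbal : (k + 1) / 2 ∈ Finset.Icc 2 (k - 2) := Finset.mem_Icc.mpr (by omega)
    have hunbal : ∀ m ∈ (Finset.Icc 2 (k - 2)).erase ((k + 1) / 2),
        (Polynomial.X : Polynomial ℤ) ^ (if k - m ≤ m ∧ m ≤ k - m + 1 then 0 else 1)
          = Polynomial.X := fun m hm => by
      rw [Finset.mem_erase, Finset.mem_Icc] at hm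
      rw [if_neg (by omega), pow_one]
    rw [← Finset.add_sum_erase _ _ hbal, if_pos (by omega), pow_zero, Finset.sum_congr rfl hunbal,
      Finset.sum_const, Finset.card_erase_of_mem hbal, Nat.card_Icc, nsmul_eq_mul,
      show k - 2 + 1 - 2 - 1 = k - 4 by omega]
  · rw [Finset.Icc_eq_empty (by omega), Finset.sum_empty]

lemma P0000_eq_X_pow_mul :
    P0000 = X ^ 4 * mk fun k => 1 + (k : Polynomial ℤ) * Polynomial.X := by
  ext k
  rw [coeff_X_pow_mul', coeff_P0000]
  split_ifs
  · rw [coeff_mk, Nat.cast_sub ‹_›]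
  · rfl

section

variable {R : Type*} [CommRing R]

lemma mk_one_add_nat_mul_eq (a : R) :
    (mk fun k => 1 + (k : R) * a) = mk 1 + C a * X * mk 1 ^ 2 := by
  ext (_ | k)
  · simp
  · simp [mk_one_pow_eq_mk_choose_add, mul_assoc, coeff_succ_X_mul]
    ring

lemma one_sub_X_sq_mul_mk_one_add_nat_mul (a : R) :
    (1 - X) ^ 2 * (mk fun k => 1 + (k : R) * a) = 1 - X + X * C a := by
  rw [mk_one_add_nat_mul_eq]
  linear_combination (1 - X + C a * X * (1 + mk 1 * (1 - X))) * mk_one_mul_one_sub_eq_one R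

end

/-- `P_{0000}(q,t) = q^4/(1-q) + q^5 t/(1-q)^2`, i.e.
`(1-q)^2 P_{0000} = q^4 (1-q) + q^5 t` in `ℤ[t][[q]]`. -/
theorem stmt16 :
    ((1 : PowerSeries (Polynomial ℤ)) - X) ^ 2 * P0000
      = X ^ 4 * (1 - X) + X ^ 5 * C (Polynomial.X : Polynomial ℤ) := by
  rw [P0000_eq_X_pow_mul, mul_left_comm, one_sub_X_sq_mul_mk_one_add_nat_mul]
  ring
end

section
/- For (M,N) = (2,2), the rational q,t-Catalan series satisfies (1−q)·c_{2,2}(q,t) = q + t − qt, which in particular is symmetric in q and t. -/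
/-- `dinv(Δ) = δ(2,2) - codinv(Δ) = 1 - codinv(Δ)`. -/
noncomputable def dinv22 (Δ : Set ℕ) : ℕ := 1 - codinv22 Δ

open PowerSeries in
/-- The rational `q,t`-Catalan series
`c_{2,2}(q,t) = ∑ q^{area Δ} t^{dinv Δ}` over `(2,2)`-invariant subsets containing `0`. -/
noncomputable def c22 : PowerSeries (Polynomial ℤ) :=
  PowerSeries.mk fun k =>
    ∑ᶠ Δ ∈ {Δ : Set ℕ | Inv22 Δ ∧ 0 ∈ Δ ∧ area Δ = k},
      (Polynomial.X : Polynomial ℤ) ^ dinv22 Δ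


/-!
Closure under `+ 2` and `0 ∈ Δ` force every even number into `Δ`, and the odd elements of `Δ`
are the `2i + 1` with `i` at least the first index `j` for which `2j + 1 ∈ Δ`. So for each
area `j` there is exactly one invariant set, with gaps `1, 3, …, 2j - 1`. Its `2`-generators
are `0` and `2j + 1`, so `codinv = 1` unless `j = 0`, and
`c_{2,2} = t + q + q² + ⋯ = 1/(1 - q) + (t - 1)`.
-/

open PowerSeries

def oddGapSet (j : ℕ) : Set ℕ := {n | n % 2 = 0 ∨ 2 * j + 1 ≤ n}

lemma compl_oddGapSet (j : ℕ) : (oddGapSet j)ᶜ = (fun i => 2 * i + 1) '' Set.Iio j := by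
  ext n
  simp only [oddGapSet, Set.mem_compl_iff, Set.mem_ofPred_eq, not_or, not_le, Set.mem_image,
    Set.mem_Iio]
  constructor
  · rintro ⟨hodd, hlt⟩
    exact ⟨n / 2, by omega, by omega⟩
  · rintro ⟨i, hi, rfl⟩
    omega

lemma area_oddGapSet (j : ℕ) : area (oddGapSet j) = j := by
  rw [area, compl_oddGapSet, Set.ncard_image_of_injective _ (fun a b h => by omega),
    ← Finset.coe_Iio, Set.ncard_coe_finset, Nat.card_Iio]

lemma inv22_oddGapSet (j : ℕ) : Inv22 (oddGapSet j) := by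
  refine ⟨fun k hk => ?_, ?_⟩
  · simp only [oddGapSet, Set.mem_ofPred_eq] at hk ⊢
    omega
  · rw [compl_oddGapSet]
    exact (Set.finite_Iio j).image _

lemma add_mul_mem_of_add_mem {Δ : Set ℕ} {p a : ℕ} (hstep : ∀ k ∈ Δ, k + p ∈ Δ) (ha : a ∈ Δ)
    (k : ℕ) : a + p * k ∈ Δ := by
  induction k with
  | zero => simpa using ha
  | succ k ih => simpa [mul_add, ← add_assoc] using hstep _ ih

lemma exists_eq_oddGapSet {Δ : Set ℕ} (h : Inv22 Δ) (h0 : 0 ∈ Δ) : ∃ j, Δ = oddGapSet j := by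
  obtain ⟨hstep, hfin⟩ := h
  have hodd : ∃ i, 2 * i + 1 ∈ Δ := by
    obtain ⟨B, hB⟩ := hfin.bddAbove
    exact ⟨B, by_contra fun hmem => absurd (hB hmem) (by omega)⟩
  classical
  refine ⟨Nat.find hodd, Set.ext fun n => ?_⟩
  obtain ⟨i, rfl | rfl⟩ : ∃ i, n = 2 * i ∨ n = 2 * i + 1 := ⟨n / 2, by omega⟩
  · simpa [oddGapSet] using add_mul_mem_of_add_mem hstep h0 i
  · simp only [oddGapSet, Set.mem_ofPred_eq, Nat.mul_add_mod_self_left, Nat.one_mod,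
      one_ne_zero, false_or, add_le_add_iff_right, Nat.mul_le_mul_left_iff two_pos]
    constructor
    · exact Nat.find_min' hodd
    · intro hle
      have := add_mul_mem_of_add_mem hstep (Nat.find_spec hodd) (i - Nat.find hodd)
      rwa [show 2 * Nat.find hodd + 1 + 2 * (i - Nat.find hodd) = 2 * i + 1 by omega] at this

lemma eq_oddGapSet_area {Δ : Set ℕ} (h : Inv22 Δ) (h0 : 0 ∈ Δ) : Δ = oddGapSet (area Δ) := by
  obtain ⟨j, rfl⟩ := exists_eq_oddGapSet h h0
  rw [area_oddGapSet]

lemma ngen2_oddGapSet (j : ℕ) : Ngen2 (oddGapSet j) = {0, 2 * j + 1} := by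
  ext a
  simp only [Ngen2, oddGapSet, Set.mem_ofPred_eq, Set.mem_insert_iff, Set.mem_singleton_iff]
  constructor
  · rintro ⟨ha, hgen⟩
    by_contra hne
    exact hgen (a - 2) (by omega) (by omega)
  · rintro (rfl | rfl) <;> exact ⟨by omega, fun b _ => by omega⟩

lemma dinv22_oddGapSet (j : ℕ) : dinv22 (oddGapSet j) = if j = 0 then 1 else 0 := by
  have hzero : Set.Ico 0 (0 + 2) ∩ (oddGapSet j)ᶜ = if j = 0 then ∅ else {1} := by
    split_ifs <;> ext n <;>
      simp only [oddGapSet, Set.mem_inter_iff, Set.mem_Ico, Set.mem_compl_iff, Set.mem_ofPred_eq,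
        Set.mem_empty_iff_false, iff_false, Set.mem_singleton_iff] <;> omega
  have hlast : Set.Ico (2 * j + 1) (2 * j + 1 + 2) ∩ (oddGapSet j)ᶜ = ∅ := by
    ext n
    simp only [oddGapSet, Set.mem_inter_iff, Set.mem_Ico, Set.mem_compl_iff, Set.mem_ofPred_eq,
      Set.mem_empty_iff_false, iff_false]
    omega
  rw [dinv22, codinv22, ngen2_oddGapSet, finsum_mem_pair (by omega), hzero, hlast]
  split_ifs <;> simp

lemma setOf_inv22_area_eq_s17 (k : ℕ) :
    {Δ : Set ℕ | Inv22 Δ ∧ 0 ∈ Δ ∧ area Δ = k} = {oddGapSet k} := by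
  ext Δ
  constructor
  · rintro ⟨h, h0, rfl⟩
    exact eq_oddGapSet_area h h0
  · rintro rfl
    exact ⟨inv22_oddGapSet k, Or.inl rfl, area_oddGapSet k⟩

lemma c22_eq_mk_one_add_C : c22 = mk 1 + C (Polynomial.X - 1) := by
  ext k
  rw [c22, coeff_mk, setOf_inv22_area_eq_s17, finsum_mem_singleton, dinv22_oddGapSet, map_add,
    coeff_mk, coeff_C]
  split_ifs <;> simp

/-- `(1-q) c_{2,2}(q,t) = q + t - qt`, which is symmetric in `q` and `t`. -/
theorem stmt17 :
    ((1 : PowerSeries (Polynomial ℤ)) - X) * c22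
      = X + C (Polynomial.X : Polynomial ℤ) - X * C (Polynomial.X : Polynomial ℤ) := by
  rw [c22_eq_mk_one_add_C, mul_add, mul_comm, mk_one_mul_one_sub_eq_one, map_sub, map_one]
  ring
end
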